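/- Let ψ be a SAT instance with clauses c₁, …, c_m over variables x₁, …, x_n (n > 2), and let A(ψ) be the 3-letter automaton of Berlinkov's construction. If ψ is satisfiable under truth assignment τ, then the word w = c·v(τ)·c of length n + 2 is a synchronizing word for A(ψ), where v(τ) ∈ {a,b}ⁿ has j-th letter a if τ(x_j) = 1 and b if τ(x_j) = 0. -/
import Mathlib


/-- The three-letter alphabet {a, b, c}. -/
inductive Letter3 where
  | a | b | c
deriving DecidableEq

/-- Extension of a transition function to words (left-to-right action). -/
def runW {Q A : Type*} (δ : Q → A → Q) : Q → List A → Q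
  | q, [] => q
  | q, x :: w => runW δ (δ q x) w

/-- States of Berlinkov's automaton A(ψ) for a SAT instance with m clauses and n
variables.  `q i j` encodes q_{i+1,j+1} (so `q ⟨m⟩ ⟨n⟩` is the state z₁),
`p i j` encodes p_{i+1,j+1}, and `z0` is the zero state. -/
inductive St (m n : ℕ) where
  | q : Fin (m + 1) → Fin (n + 1) → St m n
  | p : Fin (m + 1) → Fin (n + 1) → St m n
  | z0 : St m n
deriving DecidableEq

/-- The transition function of Berlinkov's automaton A(ψ).  `pos i j` means the
literal x_{j+1} occurs in clause c_{i+1}; `neg i j` means ¬x_{j+1} occurs there. -/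
def St.delta {m n : ℕ} (pos neg : Fin m → Fin n → Bool) : St m n → Letter3 → St m n
  | .q i j, .a =>
      if hj : (j : ℕ) < n then
        if hi : (i : ℕ) < m then
          if pos ⟨i, hi⟩ ⟨j, hj⟩ then .z0 else .q i ⟨(j : ℕ) + 1, by omega⟩
        else .q i ⟨(j : ℕ) + 1, by omega⟩
      else if (i : ℕ) < m then .z0 else .q i ⟨0, by omega⟩
  | .q i j, .b =>
      if hj : (j : ℕ) < n then
        if hi : (i : ℕ) < m then
          if neg ⟨i, hi⟩ ⟨j, hj⟩ then .z0 else .q i ⟨(j : ℕ) + 1, by omega⟩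
        else .q i ⟨(j : ℕ) + 1, by omega⟩
      else if (i : ℕ) < m then .z0 else .q i ⟨0, by omega⟩
  | .q i j, .c =>
      if (j : ℕ) < n then .q i ⟨0, by omega⟩
      else if (i : ℕ) < m then .q ⟨m, by omega⟩ ⟨0, by omega⟩ else .z0
  | .p i j, x =>
      if hj : (j : ℕ) < n then .p i ⟨(j : ℕ) + 1, by omega⟩
      else match x with
        | .c => .q i ⟨0, by omega⟩
        | _ => .z0
  | .z0, _ => .z0

/-- Clause c_{i+1} is satisfied by the truth assignment τ. -/
def clauseSat {m n : ℕ} (pos neg : Fin m → Fin n → Bool) (τ : Fin n → Bool) (i : Fin m) : Prop :=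
  ∃ j : Fin n, (pos i j = true ∧ τ j = true) ∨ (neg i j = true ∧ τ j = false)

/-- The word v(τ) ∈ {a,b}ⁿ encoding a truth assignment. -/
def encWord {n : ℕ} (τ : Fin n → Bool) : List Letter3 :=
  List.ofFn fun j : Fin n => if τ j then Letter3.a else Letter3.b

section Aux

variable {m n : ℕ} (pos neg : Fin m → Fin n → Bool) (τ : Fin n → Bool)

lemma runW_append {Q A : Type*} (δ : Q → A → Q) (u v : List A) (q : Q) :
    runW δ q (u ++ v) = runW δ (runW δ q u) v := by
  induction u generalizing q with
  | nil => rfl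
  | cons x u ih => simp only [List.cons_append, runW]; exact ih _

lemma runW_one {Q A : Type*} (δ : Q → A → Q) (s : Q) (x : A) :
    runW δ s [x] = δ s x := rfl

lemma runW_z0 (w : List Letter3) : runW (St.delta pos neg) St.z0 w = St.z0 := by
  induction w with
  | nil => rfl
  | cons x w ih =>
    have h : St.delta pos neg St.z0 x = St.z0 := by cases x <;> rfl
    rw [runW, h, ih]

lemma runW_p (w : List Letter3) (hw : Letter3.c ∉ w) :
    ∀ (i : Fin (m+1)) (j : Fin (n+1)), n < (j:ℕ) + w.length →
      runW (St.delta pos neg) (St.p i j) w = St.z0 := by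
  induction w with
  | nil =>
    intro i j h
    have := j.isLt
    simp only [List.length_nil, Nat.add_zero] at h
    omega
  | cons x w ih =>
    intro i j h
    simp only [List.mem_cons, not_or] at hw
    rcases Nat.lt_or_ge (j:ℕ) n with hj | hj
    · have hd : St.delta pos neg (St.p i j) x = St.p i ⟨(j:ℕ)+1, by omega⟩ := by
        cases x <;> simp [St.delta, hj]
      rw [runW, hd]
      simp only [List.length_cons] at h
      exact ih hw.2 i _ (by simp only [Fin.val_mk]; omega)
    · have hjn : ¬ ((j:ℕ) < n) := by omega
      have hd : St.delta pos neg (St.p i j) x = St.z0 := by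
        cases x
        · simp [St.delta, hjn]
        · simp [St.delta, hjn]
        · exact absurd rfl hw.1
      rw [runW, hd, runW_z0]

lemma runW_qm (w : List Letter3) (hw : Letter3.c ∉ w) :
    ∀ (j : Fin (n+1)) (h : (j:ℕ) + w.length ≤ n),
      runW (St.delta pos neg) (St.q ⟨m, by omega⟩ j) w
        = St.q ⟨m, by omega⟩ ⟨(j:ℕ) + w.length, by omega⟩ := by
  induction w with
  | nil =>
    intro j h
    simp only [runW, List.length_nil, Nat.add_zero]
  | cons x w ih =>
    intro j h
    simp only [List.mem_cons, not_or] at hw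
    simp only [List.length_cons] at h
    have hj : (j:ℕ) < n := by omega
    have hd : St.delta pos neg (St.q ⟨m, by omega⟩ j) x
        = St.q ⟨m, by omega⟩ ⟨(j:ℕ)+1, by omega⟩ := by
      cases x
      · simp [St.delta, hj]
      · simp [St.delta, hj]
      · exact absurd rfl hw.1
    rw [runW, hd, ih hw.2 _ (by simp only [Fin.val_mk, List.length_cons]; omega)]
    congr 1
    simp only [Fin.mk.injEq, List.length_cons]
    omega

lemma runW_clause (i : ℕ) (hi : i < m) :
    ∀ (w : List Letter3) (j : ℕ) (hjl : j + w.length = n),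
      (∀ jf : Fin n, ∀ hlo : j ≤ (jf:ℕ),
          w[(jf:ℕ) - j]'(by omega) = (if τ jf then Letter3.a else Letter3.b)) →
      (∃ jf : Fin n, j ≤ (jf:ℕ) ∧
          ((pos ⟨i, hi⟩ jf = true ∧ τ jf = true) ∨
           (neg ⟨i, hi⟩ jf = true ∧ τ jf = false))) →
      runW (St.delta pos neg) (St.q ⟨i, by omega⟩ ⟨j, by omega⟩) w = St.z0 := by
  intro w
  induction w with
  | nil =>
    intro j hjl _ hsat
    obtain ⟨jf, hlo, _⟩ := hsat
    have := jf.isLt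
    simp only [List.length_nil, Nat.add_zero] at hjl
    omega
  | cons x w ih =>
    intro j hjl hlet hsat
    obtain ⟨jf0, hlo0, hsat0⟩ := hsat
    have hj : j < n := by have := jf0.isLt; omega
    have hx : x = (if τ ⟨j, hj⟩ then Letter3.a else Letter3.b) := by
      have := hlet ⟨j, hj⟩ le_rfl
      simpa using this
    simp only [List.length_cons] at hjl
    -- letters condition for the tail
    have hlet' : ∀ jf : Fin n, ∀ hlo : j + 1 ≤ (jf:ℕ),
        w[(jf:ℕ) - (j+1)]'(by omega) = (if τ jf then Letter3.a else Letter3.b) := by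
      intro jf hlo
      have h0 := hlet jf (by omega)
      have he : (jf:ℕ) - j = ((jf:ℕ) - (j+1)) + 1 := by omega
      simp only [he, List.getElem_cons_succ] at h0
      exact h0
    rcases Nat.eq_or_lt_of_le hlo0 with heq | hlt
    · -- the witness is at position j : this letter zaps
      have hjf0 : jf0 = ⟨j, hj⟩ := Fin.ext heq.symm
      subst hjf0
      cases hbτ : τ ⟨j, hj⟩ with
      | true =>
        have hxa : x = Letter3.a := by rw [hx, if_pos hbτ]
        have hp : pos ⟨i, hi⟩ ⟨j, hj⟩ = true := by
          rcases hsat0 with ⟨h1, _⟩ | ⟨_, h2⟩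
          · exact h1
          · rw [hbτ] at h2; exact absurd h2 (by simp)
        have hd : St.delta pos neg (St.q ⟨i, by omega⟩ ⟨j, by omega⟩) x = St.z0 := by
          rw [hxa]
          simp [St.delta, hj, hi, hp]
        rw [runW, hd, runW_z0]
      | false =>
        have hxb : x = Letter3.b := by rw [hx, if_neg (by simp [hbτ])]
        have hp : neg ⟨i, hi⟩ ⟨j, hj⟩ = true := by
          rcases hsat0 with ⟨_, h1⟩ | ⟨h2, _⟩
          · rw [hbτ] at h1; exact absurd h1 (by simp)
          · exact h2
        have hd : St.delta pos neg (St.q ⟨i, by omega⟩ ⟨j, by omega⟩) x = St.z0 := by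
          rw [hxb]
          simp [St.delta, hj, hi, hp]
        rw [runW, hd, runW_z0]
    · -- the witness is further right: advance
      have hd : St.delta pos neg (St.q ⟨i, by omega⟩ ⟨j, by omega⟩) x
          = St.z0 ∨
          St.delta pos neg (St.q ⟨i, by omega⟩ ⟨j, by omega⟩) x
          = St.q ⟨i, by omega⟩ ⟨j+1, by omega⟩ := by
        rw [hx]
        cases hbτ : τ ⟨j, hj⟩
        · rcases hq : neg ⟨i, hi⟩ ⟨j, hj⟩ <;> simp [St.delta, hj, hi, hq, hbτ]
        · rcases hq : pos ⟨i, hi⟩ ⟨j, hj⟩ <;> simp [St.delta, hj, hi, hq, hbτ]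
      rcases hd with hd | hd
      · rw [runW, hd, runW_z0]
      · rw [runW, hd]
        exact ih (j+1) (by omega) hlet' ⟨jf0, by omega, hsat0⟩

end Aux

/-- If ψ is satisfiable under τ, the word c·v(τ)·c of length n+2 synchronizes
Berlinkov's automaton A(ψ) (sending every state to z₀). -/
theorem sat_implies_short_sync_word
    {m n : ℕ} (hn : 2 < n) (pos neg : Fin m → Fin n → Bool)
    (τ : Fin n → Bool) (hτ : ∀ i : Fin m, clauseSat pos neg τ i) :
    ([Letter3.c] ++ encWord τ ++ [Letter3.c]).length = n + 2 ∧
      ∀ s : St m n,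
        runW (St.delta pos neg) s ([Letter3.c] ++ encWord τ ++ [Letter3.c]) = St.z0 := by
  have hlen : (encWord τ).length = n := by simp [encWord]
  have hnoc : Letter3.c ∉ encWord τ := by
    intro hmem
    rw [encWord, List.mem_ofFn] at hmem
    obtain ⟨jf, hjf⟩ := hmem
    by_cases h : τ jf <;> simp [h] at hjf
  constructor
  · simp [hlen]
  -- key: from any state q i 0, reading encWord τ ++ [c] leads to z0
  have key0 : ∀ i : Fin (m+1),
      runW (St.delta pos neg) (St.q i ⟨0, by omega⟩) (encWord τ ++ [Letter3.c]) = St.z0 := by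
    intro i
    rw [runW_append]
    rcases Nat.lt_or_ge (i:ℕ) m with hi | hi
    · have h1 : runW (St.delta pos neg) (St.q ⟨(i:ℕ), by omega⟩ ⟨0, by omega⟩) (encWord τ)
          = St.z0 := by
        refine runW_clause pos neg τ (i:ℕ) hi (encWord τ) 0 (by omega) ?_ ?_
        · intro jf _
          simp [encWord, List.getElem_ofFn]
        · obtain ⟨jf, hjf⟩ := hτ ⟨(i:ℕ), hi⟩
          exact ⟨jf, Nat.zero_le _, hjf⟩
      rw [show (St.q i ⟨0, by omega⟩ : St m n) = St.q ⟨(i:ℕ), by omega⟩ ⟨0, by omega⟩ from rfl,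
        h1, runW_z0]
    · have him : i = (⟨m, by omega⟩ : Fin (m + 1)) :=
        Fin.ext (by have := i.isLt; simp only [Fin.val_mk]; omega)
      rw [him, runW_qm pos neg (encWord τ) hnoc ⟨0, by omega⟩ (by simp [hlen]), runW_one]
      simp only [St.delta, Fin.val_mk, hlen]
      rw [if_neg (by omega), if_neg (by omega)]
  intro s
  rw [show [Letter3.c] ++ encWord τ ++ [Letter3.c]
      = Letter3.c :: (encWord τ ++ [Letter3.c]) from by simp, runW]
  cases s with
  | z0 =>
    have h : St.delta pos neg St.z0 Letter3.c = St.z0 := rfl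
    rw [h, runW_z0]
  | q i j =>
    rcases Nat.lt_or_ge (j:ℕ) n with hj | hj
    · have hd : St.delta pos neg (St.q i j) Letter3.c = St.q i ⟨0, by omega⟩ := by
        simp [St.delta, hj]
      rw [hd]; exact key0 i
    · have hjn : ¬ ((j:ℕ) < n) := by omega
      rcases Nat.lt_or_ge (i:ℕ) m with hi | hi
      · have hd : St.delta pos neg (St.q i j) Letter3.c
            = St.q ⟨m, by omega⟩ ⟨0, by omega⟩ := by
          simp [St.delta, hjn, hi]
        rw [hd]; exact key0 _
      · have hd : St.delta pos neg (St.q i j) Letter3.c = St.z0 := by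
          simp only [St.delta]
          rw [if_neg hjn, if_neg (by omega)]
        rw [hd, runW_z0]
  | p i j =>
    rcases Nat.lt_or_ge (j:ℕ) n with hj | hj
    · have hd : St.delta pos neg (St.p i j) Letter3.c = St.p i ⟨(j:ℕ)+1, by omega⟩ := by
        simp [St.delta, hj]
      rw [hd, runW_append]
      rw [runW_p pos neg (encWord τ) hnoc i _ (by simp only [Fin.val_mk, hlen]; omega), runW_z0]
    · have hjn : ¬ ((j:ℕ) < n) := by omega
      have hd : St.delta pos neg (St.p i j) Letter3.c = St.q i ⟨0, by omega⟩ := by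
        simp [St.delta, hjn]
      rw [hd]; exact key0 i
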